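/- arXiv:2204.04923 — 2 statements merged into one kernel-verified Lean document; each statement's English description precedes it below -/
import Mathlib

section
/- Let u : ∂B → ℝ be C¹ on the unit sphere ∂B ⊂ ℝⁿ with tangential gradient ∇u. For fixed x ∈ ∂B, the tangential divergence of T(y) = (u(y)-u(x))(y-x)/|x-y|^{n+s} on ∂B equals div^τ T(y) = -(s+1)(u(y)-u(x))/|x-y|^{n+s} + (n+s)(u(y)-u(x))/(4|x-y|^{n+s-2}) + (∇u(y)·(y-x))/|x-y|^{n+s}. -/
/-!
Write the field as `T(z) = k(z) (z - x)` with the scalar `k(z) = |z - x|^{-(n+s)} (u(z) - u(x))`.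
Then `DT(y) = k(y) I + (y - x) ⊗ ∇k(y)`, so
`div^τ T(y) = (n - |y|²) k(y) + ∇k(y)·(y - x) - (∇k(y)·y) (y·(y - x))`.
Expanding `∇k(y)`, the result follows from Euler's relation `∇u(y)·y = 0` (as `u` is
homogeneous of degree `0`) and from `y·(y - x) = |y - x|²/2` on the sphere.
-/

open Metric MeasureTheory

/-- The (full) divergence of a vector field on `ℝⁿ`. -/
noncomputable def vdiv {n : ℕ}
    (T : EuclideanSpace ℝ (Fin n) → EuclideanSpace ℝ (Fin n))
    (y : EuclideanSpace ℝ (Fin n)) : ℝ :=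
  ∑ i, fderiv ℝ T y (EuclideanSpace.single i 1) i

/-- The tangential divergence on the unit sphere: `div^τ T(y) = div T(y) - y·(DT(y) y)`. -/
noncomputable def tdiv {n : ℕ}
    (T : EuclideanSpace ℝ (Fin n) → EuclideanSpace ℝ (Fin n))
    (y : EuclideanSpace ℝ (Fin n)) : ℝ :=
  vdiv T y - (inner ℝ y (fderiv ℝ T y y) : ℝ)

open ContinuousLinearMap InnerProductSpace

theorem fderiv_apply_self_eq_zero_of_smul_invariant {E F : Type*} [NormedAddCommGroup E]
    [NormedSpace ℝ E] [NormedAddCommGroup F] [NormedSpace ℝ F] {u : E → F} {y : E}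
    (hu : DifferentiableAt ℝ u y) (hhom : ∀ c : ℝ, 0 < c → u (c • y) = u y) :
    fderiv ℝ u y y = 0 := by
  have hray : HasDerivAt (fun c : ℝ => u (c • y)) (fderiv ℝ u y y) 1 := by
    have hline : HasDerivAt (fun c : ℝ => c • y) y 1 := by
      simpa using (hasDerivAt_id (1 : ℝ)).smul_const y
    exact hu.hasFDerivAt.comp_hasDerivAt_of_eq 1 hline (one_smul ℝ y).symm
  have hconst : (fun c : ℝ => u (c • y)) =ᶠ[nhds 1] fun _ => u y := by
    filter_upwards [eventually_gt_nhds one_pos] with c hc using hhom c hc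
  exact hray.unique ((hasDerivAt_const 1 (u y)).congr_of_eventuallyEq hconst)

section InnerProductSpace

variable {E : Type*} [NormedAddCommGroup E] [InnerProductSpace ℝ E]

theorem hasFDerivAt_norm_rpow_of_ne_zero {x : E} (hx : x ≠ 0) (p : ℝ) :
    HasFDerivAt (fun x : E ↦ ‖x‖ ^ p) ((p * ‖x‖ ^ (p - 2)) • innerSL ℝ x) x := by
  convert! (hasStrictFDerivAt_norm_sq x).hasFDerivAt.rpow_const (p := p / 2) (by simp [hx]) using 0
  simp_rw [← Real.rpow_natCast_mul (norm_nonneg _), ← Nat.cast_smul_eq_nsmul ℝ, smul_smul]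
  ring_nf

theorem HasFDerivAt.norm_sub_rpow_mul {g : E → ℝ} {g' : E →L[ℝ] ℝ} {x y : E}
    (hg : HasFDerivAt g g' y) (hxy : y - x ≠ 0) (p : ℝ) :
    HasFDerivAt (fun z => ‖z - x‖ ^ p * g z)
      (‖y - x‖ ^ p • g' + (p * g y * ‖y - x‖ ^ (p - 2)) • innerSL ℝ (y - x)) y := by
  refine (((hasFDerivAt_norm_rpow_of_ne_zero hxy p).comp y
    ((hasFDerivAt_id y).sub_const x)).mul hg).congr_fderiv ?_
  ext v
  simp only [add_apply, smul_apply, smul_eq_mul, comp_apply, coe_innerSL_apply, id_apply]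
  ring

theorem inner_sub_eq_half_norm_sub_sq {x y : E} (h : ‖x‖ = ‖y‖) :
    ⟪y, y - x⟫_ℝ = ‖y - x‖ ^ 2 / 2 := by
  rw [norm_sub_sq_real, inner_sub_right, real_inner_self_eq_norm_sq, h]
  ring

end InnerProductSpace

section Divergence

variable {n : ℕ} {k : EuclideanSpace ℝ (Fin n) → ℝ} {x y : EuclideanSpace ℝ (Fin n)}

theorem sum_apply_single_mul (L : EuclideanSpace ℝ (Fin n) →L[ℝ] ℝ)
    (v : EuclideanSpace ℝ (Fin n)) :
    ∑ i, L (EuclideanSpace.single i 1) * v i = L v := by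
  conv_rhs => rw [← (EuclideanSpace.basisFun (Fin n) ℝ).sum_repr v]
  simp [map_sum, mul_comm]

theorem hasFDerivAt_smul_sub (hk : DifferentiableAt ℝ k y) :
    HasFDerivAt (fun z => k z • (z - x))
      (k y • ContinuousLinearMap.id ℝ _ + (fderiv ℝ k y).smulRight (y - x)) y :=
  hk.hasFDerivAt.smul ((hasFDerivAt_id y).sub_const x)

theorem vdiv_smul_sub (hk : DifferentiableAt ℝ k y) :
    vdiv (fun z => k z • (z - x)) y = n * k y + fderiv ℝ k y (y - x) := by
  simp only [vdiv, (hasFDerivAt_smul_sub hk).fderiv, add_apply, smul_apply, id_apply,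
    smulRight_apply, PiLp.add_apply, PiLp.smul_apply, smul_eq_mul]
  rw [Finset.sum_add_distrib, ← Finset.mul_sum, sum_apply_single_mul]
  simp [mul_comm]

theorem tdiv_smul_sub (hk : DifferentiableAt ℝ k y) :
    tdiv (fun z => k z • (z - x)) y
      = (n - ‖y‖ ^ 2) * k y + fderiv ℝ k y (y - x) - fderiv ℝ k y y * ⟪y, y - x⟫_ℝ := by
  simp only [tdiv, vdiv_smul_sub hk, (hasFDerivAt_smul_sub hk).fderiv, add_apply, smul_apply,
    id_apply, smulRight_apply, inner_add_right, real_inner_smul_right, real_inner_self_eq_norm_sq]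
  ring

end Divergence

theorem tangential_div_of_kernel_field_general (n : ℕ) (s : ℝ)
    (u : EuclideanSpace ℝ (Fin n) → ℝ)
    (hu : ContDiffOn ℝ 1 u {0}ᶜ)
    (hhom : ∀ c : ℝ, 0 < c → ∀ y, u (c • y) = u y)
    (x y : EuclideanSpace ℝ (Fin n))
    (hx : x ∈ sphere (0 : EuclideanSpace ℝ (Fin n)) 1)
    (hy : y ∈ sphere (0 : EuclideanSpace ℝ (Fin n)) 1)
    (hxy : y ≠ x) :
    tdiv (fun z => (‖x - z‖ ^ ((n : ℝ) + s))⁻¹ • ((u z - u x) • (z - x))) y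
      = -(s + 1) * (u y - u x) / ‖x - y‖ ^ ((n : ℝ) + s)
        + ((n : ℝ) + s) * (u y - u x) / (4 * ‖x - y‖ ^ ((n : ℝ) + s - 2))
        + (inner ℝ (gradient u y) (y - x) : ℝ) / ‖x - y‖ ^ ((n : ℝ) + s) := by
  rw [mem_sphere_zero_iff_norm] at hx hy
  set p : ℝ := n + s
  have hud : DifferentiableAt ℝ u y := (hu.differentiableOn one_ne_zero).differentiableAt
    (isOpen_compl_singleton.mem_nhds (norm_ne_zero_iff.1 (hy ▸ one_ne_zero)))
  have hr : 0 < ‖y - x‖ := norm_pos_iff.2 (sub_ne_zero.2 hxy)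
  have hT : (fun z => (‖x - z‖ ^ p)⁻¹ • ((u z - u x) • (z - x)))
      = fun z => (‖z - x‖ ^ (-p) * (u z - u x)) • (z - x) := by
    funext z
    rw [smul_smul, norm_sub_rev, Real.rpow_neg (norm_nonneg _)]
  have hk := (hud.hasFDerivAt.sub_const (u x)).norm_sub_rpow_mul (sub_ne_zero.2 hxy) (-p)
  have hEuler := fderiv_apply_self_eq_zero_of_smul_invariant hud (fun c hc => hhom c hc y)
  have hpow : ∀ q : ℝ, ‖y - x‖ ^ (q - 2) = ‖y - x‖ ^ q / ‖y - x‖ ^ 2 := fun q => by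
    rw [Real.rpow_sub hr, Real.rpow_two]
  rw [hT, tdiv_smul_sub hk.differentiableAt, hk.fderiv]
  simp only [add_apply, smul_apply, smul_eq_mul, coe_innerSL_apply]
  rw [hEuler, ← inner_gradient_left, real_inner_self_eq_norm_sq, real_inner_comm y (y - x),
    inner_sub_eq_half_norm_sub_sq (hx.trans hy.symm), hy, norm_sub_rev x y, hpow, hpow,
    Real.rpow_neg hr.le]
  field_simp
  simp only [p]
  ring

/-- Tangential divergence of `T(y) = (u(y)-u(x))(y-x)/|x-y|^{n+s}` on the unit sphere:
`div^τ T(y) = -(s+1)(u(y)-u(x))/|x-y|^{n+s} + (n+s)(u(y)-u(x))/(4|x-y|^{n+s-2})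
  + ∇u(y)·(y-x)/|x-y|^{n+s}`. -/
theorem tangential_div_of_kernel_field (n : ℕ) (hn : 2 ≤ n) (s : ℝ)
    (hs : s ∈ Set.Ioo (0 : ℝ) 1)
    (u : EuclideanSpace ℝ (Fin n) → ℝ)
    (hu : ContDiffOn ℝ 1 u {0}ᶜ)
    (hhom : ∀ c : ℝ, 0 < c → ∀ y, u (c • y) = u y)
    (x y : EuclideanSpace ℝ (Fin n))
    (hx : x ∈ sphere (0 : EuclideanSpace ℝ (Fin n)) 1)
    (hy : y ∈ sphere (0 : EuclideanSpace ℝ (Fin n)) 1)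
    (hxy : y ≠ x) :
    tdiv (fun z => (‖x - z‖ ^ ((n : ℝ) + s))⁻¹ • ((u z - u x) • (z - x))) y
      = -(s + 1) * (u y - u x) / ‖x - y‖ ^ ((n : ℝ) + s)
        + ((n : ℝ) + s) * (u y - u x) / (4 * ‖x - y‖ ^ ((n : ℝ) + s - 2))
        + (inner ℝ (gradient u y) (y - x) : ℝ) / ‖x - y‖ ^ ((n : ℝ) + s) :=
  tangential_div_of_kernel_field_general n s u hu hhom x y hx hy hxy
end

section
/- Let E be a nearly spherical set over the ball B with height function u, ||u||_{C¹} ≤ ε small, such that the barycenter of E equals 0. Then |∫_{∂B} y u(y) dH^{n-1}(y)|² ≤ C(n) ε ||u||²_{L²(∂B)}. -/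
/-!
Write `(1 + u)^(n+1) = 1 + (n+1) u + R(u)` with `|R(u)| ≤ 4^(n+1) u²` for `|u| ≤ 1`. Since
`∫_{∂B} y = 0` by the symmetry `y ↦ -y`, the barycenter condition reads
`(n+1) ∫ u y = -∫ R(u) y`, hence `|∫ u y| ≤ 4^(n+1) ‖u‖²_{L²}`; multiplying this by the trivial
bound `|∫ u y| ≤ ε H^{n-1}(∂B)` gives the estimate. That `H^{n-1}(∂B)` is finite follows by
covering the sphere with the radial projections of the faces of the cube `[-1, 1]^n`, which are
Lipschitz images of `(n-1)`-dimensional cubes.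
-/

open Metric MeasureTheory

theorem lipschitzOnWith_inv_norm_smul {E : Type*} [NormedAddCommGroup E] [NormedSpace ℝ E] :
    LipschitzOnWith 2 (fun x : E => ‖x‖⁻¹ • x) {x | 1 ≤ ‖x‖} := by
  refine LipschitzOnWith.of_dist_le_mul fun x (hx : 1 ≤ ‖x‖) y (hy : 1 ≤ ‖y‖) => ?_
  have hx0 : 0 < ‖x‖ := one_pos.trans_le hx
  have hy0 : 0 < ‖y‖ := one_pos.trans_le hy
  have hinv : |‖x‖⁻¹ - ‖y‖⁻¹| * ‖y‖ ≤ ‖x - y‖ := by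
    rw [inv_sub_inv hx0.ne' hy0.ne', abs_div, abs_of_pos (mul_pos hx0 hy0), abs_sub_comm,
      div_mul_eq_mul_div, mul_comm ‖x‖, ← div_div, mul_div_cancel_right₀ _ hy0.ne']
    exact div_le_of_le_mul₀ hx0.le (norm_nonneg _)
      (le_mul_of_one_le_right (norm_nonneg _) hx |>.trans' (abs_norm_sub_norm_le x y))
  calc dist (‖x‖⁻¹ • x) (‖y‖⁻¹ • y)
      = ‖‖x‖⁻¹ • (x - y) + (‖x‖⁻¹ - ‖y‖⁻¹) • y‖ := by
        rw [dist_eq_norm, smul_sub, sub_smul]; abel_nf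
    _ ≤ ‖x‖⁻¹ * ‖x - y‖ + |‖x‖⁻¹ - ‖y‖⁻¹| * ‖y‖ := by
        refine (norm_add_le _ _).trans_eq ?_
        rw [norm_smul, norm_smul, Real.norm_eq_abs, Real.norm_eq_abs, abs_inv, abs_norm]
    _ ≤ 1 * ‖x - y‖ + ‖x - y‖ := by
        gcongr
        exact inv_le_one_of_one_le₀ hx
    _ = (2 : NNReal) * dist x y := by rw [dist_eq_norm]; push_cast; ring

noncomputable def radialFace {m : ℕ} (i : Fin (m + 1)) (s : ℝ) (x : Fin m → ℝ) :
    EuclideanSpace ℝ (Fin (m + 1)) :=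
  ‖WithLp.toLp 2 (Fin.insertNth (α := fun _ => ℝ) i s x)‖⁻¹ •
    WithLp.toLp 2 (Fin.insertNth (α := fun _ => ℝ) i s x)

theorem exists_lipschitzWith_radialFace {m : ℕ} (i : Fin (m + 1)) {s : ℝ} (hs : |s| = 1) :
    ∃ K, LipschitzWith K (radialFace i s) := by
  have hinsert : LipschitzWith 1 (Fin.insertNth (α := fun _ => ℝ) i s) :=
    LipschitzWith.of_dist_le_mul fun x y => by simp [Fin.dist_insertNth_insertNth]
  have hlip := (PiLp.lipschitzWith_toLp 2 fun _ : Fin (m + 1) => ℝ).comp hinsert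
  have hmaps : Set.MapsTo (fun x => WithLp.toLp 2 (Fin.insertNth (α := fun _ => ℝ) i s x))
      Set.univ {v : EuclideanSpace ℝ (Fin (m + 1)) | 1 ≤ ‖v‖} := fun x _ => by
    simpa [hs] using PiLp.norm_apply_le (WithLp.toLp 2 (Fin.insertNth (α := fun _ => ℝ) i s x)) i
  exact ⟨_, lipschitzOnWith_univ.1 (lipschitzOnWith_inv_norm_smul.comp hlip.lipschitzOnWith hmaps)⟩

theorem sphere_subset_iUnion_radialFace (m : ℕ) :
    sphere (0 : EuclideanSpace ℝ (Fin (m + 1))) 1 ⊆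
      ⋃ i, ⋃ s ∈ ({-1, 1} : Set ℝ), radialFace i s '' closedBall 0 1 := by
  intro y hy
  rw [mem_sphere_zero_iff_norm] at hy
  set w := WithLp.ofLp y
  have hw : 0 < ‖w‖ := norm_pos_iff.2 fun h => by simp [w] at h; simp [h] at hy
  obtain ⟨i, hi⟩ := (IsGreatest.pi_norm w).1
  set v := ‖w‖⁻¹ • w
  have hv : ‖v‖ = 1 := by simp [v, norm_smul, hw.ne']
  have hvi : v i = -1 ∨ v i = 1 := by
    have : |v i| = 1 := by simp [v, abs_mul, ← Real.norm_eq_abs, hi, hw.ne']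
    rcases abs_eq zero_le_one |>.1 this with h | h <;> simp [h]
  simp only [Set.mem_iUnion, Set.mem_insert_iff, Set.mem_singleton_iff]
  refine ⟨i, v i, hvi, i.removeNth v, ?_, ?_⟩
  · exact mem_closedBall_zero_iff.2 ((pi_norm_comp_le v i.succAbove).trans hv.le)
  · have hvy : WithLp.toLp 2 v = ‖w‖⁻¹ • y := by simp [v, w]
    simp only [radialFace, Fin.insertNth_self_removeNth]
    rw [hvy, norm_smul, hy, mul_one, smul_smul, norm_inv, norm_norm, inv_inv,
      mul_inv_cancel₀ hw.ne', one_smul]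

theorem hausdorffMeasure_sphere_lt_top (n : ℕ) :
    μH[(n : ℝ) - 1] (sphere (0 : EuclideanSpace ℝ (Fin n)) 1) < ⊤ := by
  cases n with
  | zero => simp [sphere_eq_empty_of_subsingleton one_ne_zero]
  | succ m =>
    have hball : μH[m] (closedBall (0 : Fin m → ℝ) 1) < ⊤ := by
      have h := hausdorffMeasure_pi_real (ι := Fin m)
      rw [Fintype.card_fin] at h
      rw [h]
      exact measure_closedBall_lt_top
    push_cast
    rw [add_sub_cancel_right]
    refine (measure_mono (sphere_subset_iUnion_radialFace m)).trans_lt ?_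
    refine (measure_iUnion_fintype_le _ _).trans_lt <| ENNReal.sum_lt_top.2 fun i _ =>
      measure_biUnion_lt_top (Set.toFinite _) fun s hs => ?_
    have hs : |s| = 1 := by rcases hs with rfl | rfl <;> simp
    obtain ⟨K, hK⟩ := exists_lipschitzWith_radialFace i hs
    exact (hK.lipschitzOnWith.hausdorffMeasure_image_le m.cast_nonneg).trans_lt
      (ENNReal.mul_lt_top (by finiteness) hball)

theorem integral_sphere_id_eq_zero {E : Type*} [NormedAddCommGroup E] [NormedSpace ℝ E]
    [MeasurableSpace E] [BorelSpace E] (d r : ℝ) :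
    ∫ y in sphere (0 : E) r, y ∂μH[d] = 0 := by
  have h := ((IsometryEquiv.neg E).measurePreserving_hausdorffMeasure d).setIntegral_preimage_emb
    (IsometryEquiv.neg E).toHomeomorph.measurableEmbedding id (sphere 0 r)
  have hpre : (IsometryEquiv.neg E) ⁻¹' sphere 0 r = sphere 0 r := by ext; simp
  rw [hpre] at h
  have : IsAddTorsionFree E := .of_isTorsionFree ℝ E
  exact neg_eq_self.mp ((integral_neg id).symm.trans h)

def powRemainder (k : ℕ) (t : ℝ) : ℝ := (1 + t) ^ k - 1 - k * t

theorem continuous_powRemainder (k : ℕ) : Continuous (powRemainder k) := by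
  unfold powRemainder; fun_prop

theorem abs_powRemainder_le (k : ℕ) {t : ℝ} (ht : |t| ≤ 1) :
    |powRemainder k t| ≤ 4 ^ k * t ^ 2 := by
  induction k with
  | zero => simp [powRemainder, sq_nonneg]
  | succ k ih =>
    have hrec : powRemainder (k + 1) t = (1 + t) * powRemainder k t + k * t ^ 2 := by
      simp only [powRemainder]; push_cast; ring
    have hk : (k : ℝ) ≤ 4 ^ k := by exact_mod_cast (Nat.lt_pow_self (by norm_num)).le
    have h1t : |1 + t| ≤ 2 := (abs_add_le _ _).trans (by rw [abs_one]; linarith)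
    have h4 : (0 : ℝ) ≤ 4 ^ k * t ^ 2 := by positivity
    calc |powRemainder (k + 1) t| ≤ |(1 + t) * powRemainder k t| + |k * t ^ 2| := by
          rw [hrec]; exact abs_add_le _ _
      _ = |1 + t| * |powRemainder k t| + k * t ^ 2 := by
          rw [abs_mul, abs_of_nonneg (by positivity : (0 : ℝ) ≤ k * t ^ 2)]
      _ ≤ 2 * (4 ^ k * t ^ 2) + 4 ^ k * t ^ 2 := by gcongr
      _ ≤ 4 ^ (k + 1) * t ^ 2 := by rw [pow_succ (4 : ℝ) k]; nlinarith

section BoundedFunction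

variable {E : Type*} [NormedAddCommGroup E] [NormedSpace ℝ E] [MeasurableSpace E]
  {μ : Measure E} {u : E → ℝ}

theorem ae_norm_smul_le_of_abs_le (hy : ∀ᵐ y ∂μ, ‖y‖ ≤ 1) {c : ℝ} (huc : ∀ᵐ y ∂μ, |u y| ≤ c) :
    ∀ᵐ y ∂μ, ‖u y • y‖ ≤ c := by
  filter_upwards [hy, huc] with y hy huc
  rw [norm_smul, Real.norm_eq_abs]
  exact (mul_le_mul huc hy (norm_nonneg y) ((abs_nonneg _).trans huc)).trans_eq (mul_one c)

theorem integrable_smul_id_of_abs_le [OpensMeasurableSpace E] [SecondCountableTopology E]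
    [IsFiniteMeasure μ] (hy : ∀ᵐ y ∂μ, ‖y‖ ≤ 1) (hu : AEStronglyMeasurable u μ) {c : ℝ}
    (huc : ∀ᵐ y ∂μ, |u y| ≤ c) : Integrable (fun y => u y • y) μ :=
  .of_bound (hu.smul aestronglyMeasurable_id) c (ae_norm_smul_le_of_abs_le hy huc)

theorem integral_one_add_pow_smul [OpensMeasurableSpace E] [SecondCountableTopology E]
    [IsFiniteMeasure μ] (hy : ∀ᵐ y ∂μ, ‖y‖ ≤ 1) (hid : ∫ y, y ∂μ = 0)
    (hu : AEStronglyMeasurable u μ) (hu1 : ∀ᵐ y ∂μ, |u y| ≤ 1) (k : ℕ) :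
    ∫ y, (1 + u y) ^ k • y ∂μ =
      (k : ℝ) • ∫ y, u y • y ∂μ + ∫ y, powRemainder k (u y) • y ∂μ := by
  have hid_int : Integrable (fun y : E => y) μ := .of_bound aestronglyMeasurable_id 1 hy
  have hlin : Integrable (fun y => (k : ℝ) • (u y • y)) μ :=
    (integrable_smul_id_of_abs_le hy hu hu1).smul (k : ℝ)
  have hrem := integrable_smul_id_of_abs_le hy (c := 4 ^ k)
    ((continuous_powRemainder k).comp_aestronglyMeasurable hu) (by
      filter_upwards [hu1] with y hy
      exact (abs_powRemainder_le k hy).trans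
        (mul_le_of_le_one_right (by positivity) ((sq_le_one_iff_abs_le_one _).2 hy)))
  have hsplit : (fun y => (1 + u y) ^ k • y) =
      fun y => (y + (k : ℝ) • (u y • y)) + powRemainder k (u y) • y := by
    funext y
    have : (1 + u y) ^ k = 1 + k * u y + powRemainder k (u y) := by
      simp only [powRemainder]; ring
    rw [this, add_smul, add_smul, one_smul, mul_smul]
  rw [hsplit, integral_add (f := fun y => y + (k : ℝ) • (u y • y)) (hid_int.add hlin) hrem,
    integral_add hid_int hlin, integral_smul, hid, zero_add]

theorem norm_integral_powRemainder_smul_le [IsFiniteMeasure μ] (hy : ∀ᵐ y ∂μ, ‖y‖ ≤ 1)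
    (hu : AEStronglyMeasurable u μ) (hu1 : ∀ᵐ y ∂μ, |u y| ≤ 1) (k : ℕ) :
    ‖∫ y, powRemainder k (u y) • y ∂μ‖ ≤ 4 ^ k * ∫ y, u y ^ 2 ∂μ := by
  rw [← integral_const_mul]
  refine norm_integral_le_of_norm_le (Integrable.const_mul (.of_bound (hu.pow 2) 1 ?_) _) ?_
  · filter_upwards [hu1] with y hy
    rw [Pi.pow_apply, Real.norm_eq_abs, abs_pow]
    exact pow_le_one₀ (abs_nonneg _) hy
  · filter_upwards [hy, hu1] with y hy hu1
    rw [norm_smul, Real.norm_eq_abs]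
    exact (mul_le_of_le_one_right (abs_nonneg _) hy).trans (abs_powRemainder_le k hu1)

theorem norm_integral_smul_sq_le_of_integral_one_add_pow_smul_eq_zero [OpensMeasurableSpace E]
    [SecondCountableTopology E] [IsFiniteMeasure μ] (hy : ∀ᵐ y ∂μ, ‖y‖ ≤ 1)
    (hid : ∫ y, y ∂μ = 0) (hu : AEStronglyMeasurable u μ) {ε : ℝ} (hε : ε ≤ 1)
    (hub : ∀ᵐ y ∂μ, |u y| ≤ ε) {k : ℕ} (hk : k ≠ 0) (hbar : ∫ y, (1 + u y) ^ k • y ∂μ = 0) :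
    ‖∫ y, u y • y ∂μ‖ ^ 2 ≤ μ.real Set.univ * 4 ^ k * ε * ∫ y, u y ^ 2 ∂μ := by
  have hu1 : ∀ᵐ y ∂μ, |u y| ≤ 1 := hub.mono fun y h => h.trans hε
  set I := ∫ y, u y • y ∂μ
  set J := ∫ y, powRemainder k (u y) • y ∂μ
  have hIJ : (k : ℝ) • I = -J :=
    eq_neg_of_add_eq_zero_left ((integral_one_add_pow_smul hy hid hu hu1 k).symm.trans hbar)
  have hI_le_J : ‖I‖ ≤ ‖J‖ := by
    rw [← norm_neg J, ← hIJ, norm_smul, Real.norm_natCast]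
    exact le_mul_of_one_le_left (norm_nonneg _) (Nat.one_le_cast.2 (Nat.one_le_iff_ne_zero.2 hk))
  have hI : ‖I‖ ≤ ε * μ.real Set.univ :=
    norm_integral_le_of_norm_le_const (ae_norm_smul_le_of_abs_le hy hub)
  calc ‖I‖ ^ 2 = ‖I‖ * ‖I‖ := sq _
    _ ≤ (4 ^ k * ∫ y, u y ^ 2 ∂μ) * (ε * μ.real Set.univ) :=
        mul_le_mul (hI_le_J.trans (norm_integral_powRemainder_smul_le hy hu hu1 k)) hI
          (norm_nonneg _) (by positivity)
    _ = μ.real Set.univ * 4 ^ k * ε * ∫ y, u y ^ 2 ∂μ := by ring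

end BoundedFunction

theorem barycenter_estimate_general (n : ℕ) :
    ∃ C : ℝ, 0 < C ∧ ∃ ε₀ : ℝ, ε₀ ∈ Set.Ioo (0 : ℝ) 1 ∧
      ∀ (u : EuclideanSpace ℝ (Fin n) → ℝ) (ε : ℝ), 0 ≤ ε → ε ≤ ε₀ →
        Continuous u →
        (∀ y ∈ sphere (0 : EuclideanSpace ℝ (Fin n)) 1, |u y| ≤ ε) →
        (∀ y ∈ sphere (0 : EuclideanSpace ℝ (Fin n)) 1, ‖gradient u y‖ ≤ ε) →
        -- barycenter condition `∫_E x dx = 0` in polar coordinates: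
        (∫ y in sphere (0 : EuclideanSpace ℝ (Fin n)) 1,
            (1 + u y) ^ (n + 1) • y ∂μH[(n : ℝ) - 1]) = 0 →
        ‖∫ y in sphere (0 : EuclideanSpace ℝ (Fin n)) 1, u y • y ∂μH[(n : ℝ) - 1]‖ ^ 2
          ≤ C * ε * ∫ y in sphere (0 : EuclideanSpace ℝ (Fin n)) 1,
              (u y) ^ 2 ∂μH[(n : ℝ) - 1] := by
  set S := sphere (0 : EuclideanSpace ℝ (Fin n)) 1
  set μ := μH[(n : ℝ) - 1].restrict S
  have : IsFiniteMeasure μ := isFiniteMeasure_restrict.2 (hausdorffMeasure_sphere_lt_top n).ne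
  refine ⟨(μ.real Set.univ + 1) * 4 ^ (n + 1), by positivity, 1 / 2, ⟨by norm_num, by norm_num⟩,
    fun u ε hε hεε₀ hu hub _ hbar => ?_⟩
  have hS : MeasurableSet S := isClosed_sphere.measurableSet
  have hy : ∀ᵐ y ∂μ, ‖y‖ ≤ 1 :=
    ae_restrict_of_forall_mem hS fun y hy => (mem_sphere_zero_iff_norm.1 hy).le
  refine (norm_integral_smul_sq_le_of_integral_one_add_pow_smul_eq_zero hy
    (integral_sphere_id_eq_zero _ _) hu.aestronglyMeasurable (by linarith)
    (ae_restrict_of_forall_mem hS hub) n.succ_ne_zero hbar).trans ?_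
  gcongr
  linarith

/-- Barycenter estimate for nearly spherical sets: if the barycenter of `E` is `0`,
then `|∫_{∂B} y u(y)|² ≤ C(n) ε ‖u‖²_{L²(∂B)}`. -/
theorem barycenter_estimate (n : ℕ) (hn : 2 ≤ n) :
    ∃ C : ℝ, 0 < C ∧ ∃ ε₀ : ℝ, ε₀ ∈ Set.Ioo (0 : ℝ) 1 ∧
      ∀ (u : EuclideanSpace ℝ (Fin n) → ℝ) (ε : ℝ), 0 ≤ ε → ε ≤ ε₀ →
        Continuous u →
        (∀ y ∈ sphere (0 : EuclideanSpace ℝ (Fin n)) 1, |u y| ≤ ε) →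
        (∀ y ∈ sphere (0 : EuclideanSpace ℝ (Fin n)) 1, ‖gradient u y‖ ≤ ε) →
        -- barycenter condition `∫_E x dx = 0` in polar coordinates:
        (∫ y in sphere (0 : EuclideanSpace ℝ (Fin n)) 1,
            (1 + u y) ^ (n + 1) • y ∂μH[(n : ℝ) - 1]) = 0 →
        ‖∫ y in sphere (0 : EuclideanSpace ℝ (Fin n)) 1, u y • y ∂μH[(n : ℝ) - 1]‖ ^ 2
          ≤ C * ε * ∫ y in sphere (0 : EuclideanSpace ℝ (Fin n)) 1,
              (u y) ^ 2 ∂μH[(n : ℝ) - 1] :=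
  barycenter_estimate_general n
end
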